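/- Let A be a C*-algebra, let X and Y be Banach right A-modules, suppose that X is essential and that {y ∈ Y : y·a = 0 for all a ∈ A} = {0}, and let T : X → Y be a continuous linear map such that for every x ∈ X the value T(x) lies in the norm-closure of the set {Φ(x) : Φ ∈ Hom_A(X,Y)}. Then T ∈ Hom_A(X,Y); in particular, the space Hom_A(X,Y) is a reflexive subspace of B(X,Y). -/

import Mathlib

/-- A contractive Banach right module over a (possibly non-unital) C*-algebra `A`:
the action `(x, a) ↦ x·a` is a continuous bilinear map `X × A → X` satisfying
`(x·a)·b = x·(a*b)` and `‖x·a‖ ≤ ‖x‖·‖a‖`. -/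
structure BanachRightModule (A X : Type*) [NonUnitalCStarAlgebra A]
    [NormedAddCommGroup X] [NormedSpace ℂ X] where
  act : X →L[ℂ] A →L[ℂ] X
  act_mul : ∀ (x : X) (a b : A), act (act x a) b = act x (a * b)
  norm_act_le : ∀ (x : X) (a : A), ‖act x a‖ ≤ ‖x‖ * ‖a‖

section Defs

variable {A X Y : Type*} [NonUnitalCStarAlgebra A]
  [NormedAddCommGroup X] [NormedSpace ℂ X]
  [NormedAddCommGroup Y] [NormedSpace ℂ Y]

/-- A projection in a C*-algebra: a self-adjoint idempotent. -/
def IsProjection {A : Type*} [NonUnitalCStarAlgebra A] (e : A) : Prop :=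
  IsSelfAdjoint e ∧ IsIdempotentElem e

/-- The operator `aTb : x ↦ T(x·a)·b`. -/
noncomputable def sandwich (ρX : BanachRightModule A X) (ρY : BanachRightModule A Y)
    (T : X →L[ℂ] Y) (a b : A) : X →L[ℂ] Y :=
  ((ρY.act.flip b).comp T).comp (ρX.act.flip a)

/-- The set of continuous right `A`-module homomorphisms from `X` to `Y`. -/
def homSet (ρX : BanachRightModule A X) (ρY : BanachRightModule A Y) :
    Set (X →L[ℂ] Y) :=
  {Φ | ∀ (x : X) (a : A), Φ (ρX.act x a) = ρY.act (Φ x) a}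

/-- `β(T) = sup{‖eTf‖ : e, f ∈ A projections with ef = 0}`. -/
noncomputable def betaConst (ρX : BanachRightModule A X) (ρY : BanachRightModule A Y)
    (T : X →L[ℂ] Y) : ℝ :=
  sSup {r : ℝ | ∃ e f : A, IsProjection e ∧ IsProjection f ∧ e * f = 0 ∧
    r = ‖sandwich ρX ρY T e f‖}

/-- `γ(T) = sup{‖aTb‖ : a, b ∈ A positive contractions with ab = 0}`. -/
noncomputable def gammaConst [PartialOrder A] [StarOrderedRing A]
    (ρX : BanachRightModule A X) (ρY : BanachRightModule A Y)
    (T : X →L[ℂ] Y) : ℝ :=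
  sSup {r : ℝ | ∃ a b : A, 0 ≤ a ∧ 0 ≤ b ∧ ‖a‖ ≤ 1 ∧ ‖b‖ ≤ 1 ∧ a * b = 0 ∧
    r = ‖sandwich ρX ρY T a b‖}

/-- `δ(T) = sup_{‖x‖ ≤ 1} inf{‖T(x) − Φ(x)‖ : Φ ∈ Hom_A(X,Y)}`. -/
noncomputable def deltaConst (ρX : BanachRightModule A X) (ρY : BanachRightModule A Y)
    (T : X →L[ℂ] Y) : ℝ :=
  sSup {r : ℝ | ∃ x : X, ‖x‖ ≤ 1 ∧
    r = Metric.infDist (T x) ((fun Φ : X →L[ℂ] Y => Φ x) '' homSet ρX ρY)}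

/-- `‖ad(T)‖ = sup{‖aT − Ta‖ : a ∈ A, ‖a‖ ≤ 1}`, where `(aT)(x) = T(x·a)` and
`(Ta)(x) = T(x)·a`. -/
noncomputable def adNorm (ρX : BanachRightModule A X) (ρY : BanachRightModule A Y)
    (T : X →L[ℂ] Y) : ℝ :=
  sSup {r : ℝ | ∃ a : A, ‖a‖ ≤ 1 ∧
    r = ‖T.comp (ρX.act.flip a) - (ρY.act.flip a).comp T‖}

/-- The module `X` is essential: the linear span of `{x·a : x ∈ X, a ∈ A}` is dense. -/
def Essential (ρX : BanachRightModule A X) : Prop :=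
  Dense (Submodule.span ℂ {z : X | ∃ (x : X) (a : A), z = ρX.act x a} : Set X)

end Defs

/-!
Extend the action of `A` to its unitization `A⁺`. For fixed `x`, the bounded bilinear map
`Θ (u, w) = T (x·u)·w` on `A⁺` vanishes whenever `u * w = 0`: this holds for every
`Φ ∈ Hom_A(X, Y)`, since `Φ (x·u)·w = Φ x·(u * w)`, and `T (x·u)` is a limit of such `Φ (x·u)`.
C*-algebras are zero product determined: such a `Θ` satisfies `Θ (a, 1) = Θ (1, a)`, which here
reads `T (x·a) = T x·a`. For self-adjoint `a` this follows from a partition of unity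
`1 = ∑ u k`, `a ≈ ∑ t k • u k` by hat functions of `a` with `u k * u l = 0` for `|k - l| ≥ 2`:
only neighbouring terms survive in `Θ (a, 1) - Θ (1, a) = ∑ (t k - t l) Θ (u k, u l)`, and they
add up to `O(mesh)`. The general case follows by splitting `a` into real and imaginary parts.
-/

open Finset

lemma neg_one_pow_cross_sub (k l : ℕ) (hkl : k ≤ l + 1) (hlk : l ≤ k + 1) :
    (-1 : ℝ) ^ ((k + 1) / 2) * (-1) ^ (l / 2) - (-1) ^ (k / 2) * (-1) ^ ((l + 1) / 2)
      = 2 * ((l : ℝ) - k) := by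
  have sq : ∀ m : ℕ, ((-1 : ℝ) ^ m) ^ 2 = 1 := fun m => by
    rw [← pow_mul, pow_mul', neg_one_sq, one_pow]
  obtain rfl | rfl | rfl : l = k ∨ l = k + 1 ∨ k = l + 1 := by omega
  · ring
  · rw [show (k + 1 + 1) / 2 = k / 2 + 1 by omega]
    push_cast
    linear_combination sq ((k + 1) / 2) + sq (k / 2)
  · rw [show (l + 1 + 1) / 2 = l / 2 + 1 by omega]
    push_cast
    linear_combination -sq ((l + 1) / 2) - sq (l / 2)

noncomputable def hat (v : ℝ) : ℝ := max (1 - |v|) 0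

lemma hat_nonneg (v : ℝ) : 0 ≤ hat v := le_max_right _ _

lemma hat_eq_zero {v : ℝ} (h : 1 ≤ |v|) : hat v = 0 :=
  max_eq_right (by linarith)

lemma hat_of_abs_le {v : ℝ} (h : |v| ≤ 1) : hat v = 1 - |v| :=
  max_eq_left (by linarith)

lemma continuous_hat : Continuous hat := by unfold hat; fun_prop

lemma hat_sub_mul_hat_sub {k l : ℕ} (hkl : k + 2 ≤ l) (s : ℝ) : hat (s - k) * hat (s - l) = 0 := by
  have hkl' : (k : ℝ) + 2 ≤ l := by exact_mod_cast hkl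
  rcases le_or_gt s (k + 1) with hs | hs
  · rw [hat_eq_zero (v := s - l) (by rw [abs_of_nonpos (by linarith)]; linarith), mul_zero]
  · rw [hat_eq_zero (v := s - k) (by rw [abs_of_nonneg (by linarith)]; linarith), zero_mul]

lemma sum_affine_mul_hat_sub {n : ℕ} (hn : 1 ≤ n) {s : ℝ} (h0 : 0 ≤ s) (h1 : s ≤ n) (α β : ℝ) :
    ∑ k ∈ range (n + 1), (α + k * β) * hat (s - k) = α + β * s := by
  set j := min (n - 1) ⌊s⌋₊
  have hjs : (j : ℝ) ≤ s := (Nat.cast_le.2 (min_le_right _ _)).trans (Nat.floor_le h0)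
  have hsj : s ≤ j + 1 := by
    rcases le_total ⌊s⌋₊ (n - 1) with hc | hc
    · rw [show j = ⌊s⌋₊ from min_eq_right hc]
      exact (Nat.lt_floor_add_one s).le
    · rw [show j = n - 1 from min_eq_left hc, Nat.cast_sub hn, Nat.cast_one]
      linarith
  have hsub : {j, j + 1} ⊆ range (n + 1) := by
    intro k hk
    simp only [mem_insert, mem_singleton] at hk
    simp only [mem_range]
    omega
  rw [← sum_subset hsub, sum_pair (by omega)]
  · have e1 : hat (s - j) = 1 - (s - j) := by
      rw [hat_of_abs_le, abs_of_nonneg] <;> [linarith; rw [abs_of_nonneg] <;> linarith]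
    have e2 : hat (s - (j + 1 : ℕ)) = s - j := by
      push_cast
      rw [hat_of_abs_le, abs_of_nonpos] <;> [ring; linarith; rw [abs_of_nonpos] <;> linarith]
    rw [e1, e2]
    push_cast
    ring
  · intro k _ hk
    simp only [mem_insert, mem_singleton, not_or] at hk
    rw [hat_eq_zero, mul_zero]
    rcases Nat.lt_or_ge k j with hlt | hge
    · have : (k : ℝ) + 1 ≤ j := by exact_mod_cast hlt
      rw [abs_of_nonneg] <;> linarith
    · have : (j : ℝ) + 2 ≤ k := by exact_mod_cast (show j + 2 ≤ k by omega)
      rw [abs_of_nonpos] <;> linarith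

section GridPartition

variable {B E : Type*} [NormedRing B] [NormedAlgebra ℂ B] [NormedAddCommGroup E] [NormedSpace ℂ E]

structure IsGridPartition (a : B) (n : ℕ) (t₀ δ : ℝ) (u : ℕ → B) : Prop where
  sum_eq_one : ∑ k ∈ range (n + 1), u k = 1
  sum_smul_eq : ∑ k ∈ range (n + 1), (t₀ + k * δ) • u k = a
  mul_eq_zero : ∀ k l, k + 2 ≤ l → u k * u l = 0 ∧ u l * u k = 0
  norm_sum_smul_le : ∀ ε : ℕ → ℝ, (∀ k, |ε k| ≤ 1) → ‖∑ k ∈ range (n + 1), ε k • u k‖ ≤ 1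

lemma ContinuousLinearMap.apply_sum_smul_sum_smul (Θ : B →L[ℂ] B →L[ℂ] E) (s : Finset ℕ)
    (u : ℕ → B) (v w : ℕ → ℝ) :
    Θ (∑ k ∈ s, v k • u k) (∑ l ∈ s, w l • u l)
      = ∑ k ∈ s, ∑ l ∈ s, (v k * w l) • Θ (u k) (u l) := by
  rw [map_sum Θ, _root_.sum_apply]
  refine sum_congr rfl fun k _ => ?_
  simp only [map_smul_of_tower, smul_apply, map_sum, smul_smul]

lemma IsGridPartition.norm_apply_one_sub_apply_one_le {a : B} {n : ℕ} {t₀ δ : ℝ} {u : ℕ → B}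
    (hu : IsGridPartition a n t₀ δ u) (hδ : 0 ≤ δ) (Θ : B →L[ℂ] B →L[ℂ] E)
    (hΘ : ∀ v w, v * w = 0 → Θ v w = 0) :
    ‖Θ a 1 - Θ 1 a‖ ≤ δ * ‖Θ‖ := by
  set U : (ℕ → ℝ) → B := fun v => ∑ k ∈ range (n + 1), v k • u k
  set σ : ℕ → ℝ := fun k => (-1) ^ ((k + 1) / 2)
  set τ : ℕ → ℝ := fun k => (-1) ^ (k / 2)
  have hU : ∀ v, (∀ k, |v k| = 1) → ‖U v‖ ≤ 1 := fun v hv =>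
    hu.norm_sum_smul_le v fun k => (hv k).le
  have hσ : ∀ k, |σ k| = 1 := by simp [σ]
  have hτ : ∀ k, |τ k| = 1 := by simp [τ]
  have hΘU : ∀ v w, (∀ k, |v k| = 1) → (∀ k, |w k| = 1) → ‖Θ (U v) (U w)‖ ≤ ‖Θ‖ :=
    fun v w hv hw => by
      simpa using Θ.le_of_opNorm₂_le_of_le le_rfl (hU v hv) (hU w hw)
  -- Only the terms `Θ (u k) (u l)` with `|k - l| ≤ 1` survive, and on them
  -- `t k - t l = -(δ / 2) * (σ k * τ l - τ k * σ l)`.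
  have key : Θ a 1 - Θ 1 a = (-(δ / 2)) • (Θ (U σ) (U τ) - Θ (U τ) (U σ)) := by
    have h1 : U (fun _ => 1) = 1 := by simp [U, hu.sum_eq_one]
    rw [← hu.sum_smul_eq, ← h1]
    simp only [U, Θ.apply_sum_smul_sum_smul, ← sum_sub_distrib, smul_sum, ← sub_smul, smul_smul]
    refine sum_congr rfl fun k _ => sum_congr rfl fun l _ => ?_
    by_cases hkl : k ≤ l + 1 ∧ l ≤ k + 1
    · congr 1
      rw [neg_one_pow_cross_sub k l hkl.1 hkl.2]
      ring
    · have : Θ (u k) (u l) = 0 := by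
        rcases le_total k l with h | h
        · exact hΘ _ _ (hu.mul_eq_zero k l (by omega)).1
        · exact hΘ _ _ (hu.mul_eq_zero l k (by omega)).2
      simp [this]
  calc ‖Θ a 1 - Θ 1 a‖ = δ / 2 * ‖Θ (U σ) (U τ) - Θ (U τ) (U σ)‖ := by
        rw [key, norm_smul, norm_neg, Real.norm_of_nonneg (by positivity)]
    _ ≤ δ / 2 * (‖Θ‖ + ‖Θ‖) := by
        gcongr
        exact (norm_sub_le _ _).trans (add_le_add (hΘU σ τ hσ hτ) (hΘU τ σ hτ hσ))
    _ = δ * ‖Θ‖ := by ring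

end GridPartition

section ZeroProduct

variable {B E : Type*} [CStarAlgebra B] [NormedAddCommGroup E] [NormedSpace ℂ E]

lemma abs_le_norm_of_mem_spectrum {a : B} {t : ℝ} (ht : t ∈ spectrum ℝ a) : |t| ≤ ‖a‖ := by
  have : Nontrivial B := not_subsingleton_iff_nontrivial.1 fun _ => by
    simp [spectrum.of_subsingleton] at ht
  simpa using spectrum.norm_le_norm_of_mem ht

lemma cfc_sum_const_mul {ι : Type*} (s : Finset ι) (w : ι → ℝ) (f : ι → ℝ → ℝ) (a : B)
    (hf : ∀ k ∈ s, ContinuousOn (f k) (spectrum ℝ a)) :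
    cfc (fun t => ∑ k ∈ s, w k * f k t) a = ∑ k ∈ s, w k • cfc (f k) a := by
  rw [← Finset.sum_fn, cfc_sum (fun k t => w k * f k t) a s fun k hk => (hf k hk).const_smul (w k)]
  exact sum_congr rfl fun k hk => cfc_const_mul (w k) (f k) a (hf k hk)

-- `u k` is the hat function centred at the grid point `-R + k * (2 * R / n)`, applied to `a`.
lemma IsSelfAdjoint.exists_isGridPartition {a : B} (ha : IsSelfAdjoint a) {n : ℕ} (hn : 1 ≤ n) :
    ∃ u, IsGridPartition a n (-(‖a‖ + 1)) (2 * (‖a‖ + 1) / n) u := by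
  set R := ‖a‖ + 1
  have hR : 0 < R := by positivity
  set f : ℕ → ℝ → ℝ := fun k t => hat (n / (2 * R) * (t + R) - k)
  have hf : ∀ k, Continuous (f k) := fun k => continuous_hat.comp (by fun_prop)
  have hspec : ∀ t ∈ spectrum ℝ a, 0 ≤ n / (2 * R) * (t + R) ∧ n / (2 * R) * (t + R) ≤ n := by
    intro t ht
    obtain ⟨hlo, hhi⟩ := abs_le.1 (abs_le_norm_of_mem_spectrum ht)
    constructor
    · exact mul_nonneg (by positivity) (by linarith)
    · calc n / (2 * R) * (t + R) ≤ n / (2 * R) * (2 * R) := by gcongr; linarith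
        _ = n := div_mul_cancel₀ _ (by positivity)
  have hsum : ∀ w : ℕ → ℝ, ∑ k ∈ range (n + 1), w k • cfc (f k) a
      = cfc (fun t => ∑ k ∈ range (n + 1), w k * f k t) a := fun w =>
    (cfc_sum_const_mul _ w f a fun k _ => (hf k).continuousOn).symm
  have hsum_affine : ∀ α β : ℝ, ∀ t ∈ spectrum ℝ a,
      ∑ k ∈ range (n + 1), (α + k * β) * f k t = α + β * (n / (2 * R) * (t + R)) :=
    fun α β t ht => sum_affine_mul_hat_sub hn (hspec t ht).1 (hspec t ht).2 α β
  have hsum_one : ∀ t ∈ spectrum ℝ a, ∑ k ∈ range (n + 1), f k t = 1 := fun t ht => by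
    simpa using hsum_affine 1 0 t ht
  refine ⟨fun k => cfc (f k) a, ⟨?_, ?_, ?_, ?_⟩⟩
  · simpa [← cfc_const_one ℝ a, cfc_congr hsum_one] using hsum fun _ => 1
  · rw [hsum]
    conv_rhs => rw [← cfc_id ℝ a]
    refine cfc_congr fun t ht => ?_
    rw [hsum_affine _ _ t ht, id_eq]
    field_simp
    ring
  · intro k l hkl
    have h0 : ∀ t, f k t * f l t = 0 := fun t => hat_sub_mul_hat_sub hkl _
    constructor
    · rw [← cfc_mul (f k) (f l) a (hf k).continuousOn (hf l).continuousOn]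
      simp only [h0, cfc_const_zero]
    · rw [← cfc_mul (f l) (f k) a (hf l).continuousOn (hf k).continuousOn]
      simp only [mul_comm (f l _), h0, cfc_const_zero]
  · intro ε hε
    rw [hsum]
    refine norm_cfc_le zero_le_one fun t ht => ?_
    calc ‖∑ k ∈ range (n + 1), ε k * f k t‖ ≤ ∑ k ∈ range (n + 1), |ε k| * f k t := by
          refine (norm_sum_le _ _).trans_eq (sum_congr rfl fun k _ => ?_)
          rw [norm_mul, Real.norm_eq_abs, Real.norm_of_nonneg (hat_nonneg _)]
      _ ≤ ∑ k ∈ range (n + 1), f k t := by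
          gcongr with k
          exact mul_le_of_le_one_left (hat_nonneg _) (hε k)
      _ = 1 := hsum_one t ht

namespace ContinuousLinearMap

lemma apply_one_eq_of_mul_eq_zero_of_isSelfAdjoint (Θ : B →L[ℂ] B →L[ℂ] E)
    (hΘ : ∀ v w, v * w = 0 → Θ v w = 0) {a : B} (ha : IsSelfAdjoint a) : Θ a 1 = Θ 1 a := by
  rw [← sub_eq_zero, ← norm_le_zero_iff]
  refine ge_of_tendsto (tendsto_const_div_atTop_nhds_zero_nat (2 * (‖a‖ + 1) * ‖Θ‖))
    (Filter.eventually_atTop.2 ⟨1, fun n hn => ?_⟩)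
  obtain ⟨u, hu⟩ := ha.exists_isGridPartition hn
  calc ‖Θ a 1 - Θ 1 a‖ ≤ 2 * (‖a‖ + 1) / n * ‖Θ‖ :=
        hu.norm_apply_one_sub_apply_one_le (by positivity) Θ hΘ
    _ = 2 * (‖a‖ + 1) * ‖Θ‖ / n := div_mul_eq_mul_div _ _ _

lemma apply_one_eq_of_mul_eq_zero (Θ : B →L[ℂ] B →L[ℂ] E)
    (hΘ : ∀ v w, v * w = 0 → Θ v w = 0) (a : B) : Θ a 1 = Θ 1 a := by
  rw [← realPart_add_I_smul_imaginaryPart a]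
  simp only [map_add, map_smul, add_apply, smul_apply,
    Θ.apply_one_eq_of_mul_eq_zero_of_isSelfAdjoint hΘ (realPart a).2,
    Θ.apply_one_eq_of_mul_eq_zero_of_isSelfAdjoint hΘ (imaginaryPart a).2]

end ContinuousLinearMap

end ZeroProduct

namespace BanachRightModule

variable {A X Y : Type*} [NonUnitalCStarAlgebra A]
  [NormedAddCommGroup X] [NormedSpace ℂ X] [NormedAddCommGroup Y] [NormedSpace ℂ Y]

noncomputable def unitizationAct (ρ : BanachRightModule A X) :
    X →L[ℂ] Unitization ℂ A →L[ℂ] X :=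
  ContinuousLinearMap.smulRightL ℂ (Unitization ℂ A) X
      ⟨(Unitization.fstHom ℂ A).toLinearMap, Unitization.continuous_fst⟩ +
    ρ.act.bilinearComp (.id ℂ X) ⟨Unitization.sndHom ℂ ℂ A, Unitization.continuous_snd⟩

lemma unitizationAct_apply (ρ : BanachRightModule A X) (x : X) (u : Unitization ℂ A) :
    ρ.unitizationAct x u = u.fst • x + ρ.act x u.snd :=
  rfl

@[simp]
lemma unitizationAct_inr (ρ : BanachRightModule A X) (x : X) (a : A) :
    ρ.unitizationAct x a = ρ.act x a := by
  simp [unitizationAct_apply]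

@[simp]
lemma unitizationAct_one (ρ : BanachRightModule A X) (x : X) : ρ.unitizationAct x 1 = x := by
  simp [unitizationAct_apply]

lemma unitizationAct_unitizationAct (ρ : BanachRightModule A X) (x : X)
    (u w : Unitization ℂ A) :
    ρ.unitizationAct (ρ.unitizationAct x u) w = ρ.unitizationAct x (u * w) := by
  simp only [unitizationAct_apply, Unitization.fst_mul, Unitization.snd_mul, map_add, map_smul,
    smul_add, smul_smul, add_apply, smul_apply, ρ.act_mul, mul_comm u.fst w.fst]
  abel

lemma map_unitizationAct {ρX : BanachRightModule A X} {ρY : BanachRightModule A Y}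
    {Φ : X →L[ℂ] Y} (hΦ : Φ ∈ homSet ρX ρY) (x : X) (u : Unitization ℂ A) :
    Φ (ρX.unitizationAct x u) = ρY.unitizationAct (Φ x) u := by
  simp only [unitizationAct_apply, map_add, map_smul, hΦ x u.snd]

lemma unitizationAct_apply_eq_zero_of_mul_eq_zero {ρX : BanachRightModule A X}
    {ρY : BanachRightModule A Y} {T : X →L[ℂ] Y}
    (h : ∀ x : X, T x ∈ closure ((fun Φ : X →L[ℂ] Y => Φ x) '' homSet ρX ρY))
    (x : X) {u w : Unitization ℂ A} (huw : u * w = 0) :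
    ρY.unitizationAct (T (ρX.unitizationAct x u)) w = 0 := by
  have hsub : (fun Φ : X →L[ℂ] Y => Φ (ρX.unitizationAct x u)) '' homSet ρX ρY ⊆
      {y | ρY.unitizationAct y w = 0} := by
    rintro _ ⟨Φ, hΦ, rfl⟩
    simp [map_unitizationAct hΦ, unitizationAct_unitizationAct, huw]
  exact closure_minimal hsub
    (isClosed_eq (ρY.unitizationAct.flip w).continuous continuous_const) (h _)

end BanachRightModule

theorem stmt18_general {A X Y : Type*} [NonUnitalCStarAlgebra A]
    [NormedAddCommGroup X] [NormedSpace ℂ X]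
    [NormedAddCommGroup Y] [NormedSpace ℂ Y]
    (ρX : BanachRightModule A X) (ρY : BanachRightModule A Y)
    (T : X →L[ℂ] Y)
    (h : ∀ x : X, T x ∈ closure ((fun Φ : X →L[ℂ] Y => Φ x) '' homSet ρX ρY)) :
    T ∈ homSet ρX ρY := by
  intro x a
  set Θ := ρY.unitizationAct.bilinearComp (T ∘L ρX.unitizationAct x) (.id ℂ _)
  have hΘ : ∀ u w, u * w = 0 → Θ u w = 0 := fun u w huw =>
    BanachRightModule.unitizationAct_apply_eq_zero_of_mul_eq_zero h x huw
  simpa [Θ] using Θ.apply_one_eq_of_mul_eq_zero hΘ a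

/-- Let `A` be a C*-algebra, `X` and `Y` Banach right `A`-modules
with `X` essential and `{y ∈ Y : y·A = 0} = {0}`, and let `T : X → Y` be a
continuous linear map such that `T(x)` lies in the norm-closure of
`{Φ(x) : Φ ∈ Hom_A(X,Y)}` for every `x`.  Then `T ∈ Hom_A(X,Y)`; in particular,
`Hom_A(X,Y)` is a reflexive subspace of `B(X,Y)`. -/
theorem stmt18 {A X Y : Type*} [NonUnitalCStarAlgebra A]
    [NormedAddCommGroup X] [NormedSpace ℂ X] [CompleteSpace X]
    [NormedAddCommGroup Y] [NormedSpace ℂ Y] [CompleteSpace Y]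
    (ρX : BanachRightModule A X) (ρY : BanachRightModule A Y)
    (hX : Essential ρX)
    (hY : ∀ y : Y, (∀ a : A, ρY.act y a = 0) → y = 0)
    (T : X →L[ℂ] Y)
    (h : ∀ x : X, T x ∈ closure ((fun Φ : X →L[ℂ] Y => Φ x) '' homSet ρX ρY)) :
    T ∈ homSet ρX ρY :=
  stmt18_general ρX ρY T h
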